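/- Let D be a connected finite graph and H a nested set on D with |H| = |V(D)| - 1 (i.e. of dimension 1). Then H has a unique unsaturated element B, and the set of uncovered vertices of B consists of exactly two vertices α_1, α_2. Setting B_1 = the connected component of B\{α_2} containing α_1 and B_2 = the connected component of B\{α_1} containing α_2, the only two maximal nested sets containing H are H ∪ {B_1} and H ∪ {B_2}. -/

import Mathlib

open scoped Classical

section NestedSets

variable {V : Type*} [Fintype V] [DecidableEq V]

/-- The (induced subgraph on the) finite vertex set `B` is connected (in particular nonempty). -/
def Conn (G : SimpleGraph V) (B : Finset V) : Prop :=
  (G.induce (B : Set V)).Connected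

/-- Two vertex sets are orthogonal: no edge of `G` joins a vertex of one to a vertex
of the other. -/
def Orth (G : SimpleGraph V) (B C : Finset V) : Prop :=
  ∀ a ∈ B, ∀ b ∈ C, ¬ G.Adj a b

/-- Two subdiagrams are compatible if one contains the other or they are orthogonal. -/
def Compat (G : SimpleGraph V) (B C : Finset V) : Prop :=
  B ⊆ C ∨ C ⊆ B ∨ Orth G B C

/-- A nested set on the (connected) diagram `D` with vertex set `V`: a collection of
pairwise compatible connected subdiagrams containing `D` itself. -/
def Nested (G : SimpleGraph V) (H : Finset (Finset V)) : Prop :=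
  Finset.univ ∈ H ∧ (∀ B ∈ H, Conn G B) ∧ ∀ B ∈ H, ∀ C ∈ H, Compat G B C

/-- `iN H B` is the union of the elements of `H` strictly contained in `B`;
this coincides with the union of the *maximal* elements of `H` strictly contained in `B`. -/
noncomputable def iN (H : Finset (Finset V)) (B : Finset V) : Finset V :=
  (H.filter fun C => C ⊂ B).sup id

/-- `nN H B = n(B;H)` is the number of vertices of `B` not covered by the maximal
elements of `H` strictly contained in `B`. -/
noncomputable def nN (H : Finset (Finset V)) (B : Finset V) : ℕ :=
  (B \ iN H B).card

/-- `C` is a connected component of (the induced subgraph on) `S`. -/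
def IsCC (G : SimpleGraph V) (S C : Finset V) : Prop :=
  C ⊆ S ∧ Conn G C ∧ ∀ C', C ⊆ C' → C' ⊆ S → Conn G C' → C' = C

/-- A maximal nested set on `D`. -/
def MaxNested (G : SimpleGraph V) (F : Finset (Finset V)) : Prop :=
  Nested G F ∧ ∀ K, Nested G K → F ⊆ K → K = F

end NestedSets

/-!
The uncovered sets `B \ i_K(B)`, `B ∈ K`, of a nested set `K` partition `V` (a vertex is
uncovered exactly in the smallest member containing it, and members sharing a vertex are
comparable) and are nonempty (a maximal member strictly inside `B` is left by an edge of `B`).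
Hence `∑_{B ∈ K} (n(B;K) - 1) = |V| - |K|`: nested sets have at most `|V|` elements, those with
`|V|` are maximal and have all `n(B;K) = 1`, and in dimension one a single `B` has `n(B;H) = 2`.

Let `a₁, a₂` be its uncovered vertices and `B₁` the component of `B \ {a₂}` through `a₁`. A
member of `H` strictly inside `B` avoids `a₂`, so it is either absorbed by `B₁` or orthogonal to
it; thus `H ∪ {B₁}` is nested of cardinality `|V|`, hence maximal. Conversely a maximal
`K = H ∪ {X}` has `n(B;K) = 1`, forcing `X ⊊ B` to contain exactly one `aᵢ`, say `a₁`. Then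
`X ⊆ B₁`, and `X ≠ B₁` would make `K ∪ {B₁}` nested with `|V| + 1` elements.
-/

namespace Conn

variable {V : Type*} {G : SimpleGraph V} {A B C : Finset V}

theorem singleton (a : V) : Conn G {a} := by
  rw [Conn, Finset.coe_singleton, SimpleGraph.induce_singleton_eq_top]
  exact SimpleGraph.connected_top

theorem nonempty (hB : Conn G B) : B.Nonempty := by
  obtain ⟨⟨x, hx⟩⟩ := SimpleGraph.Connected.nonempty hB
  exact ⟨x, hx⟩

theorem union_of_mem [DecidableEq V] (hA : Conn G A) (hC : Conn G C) {a : V} (haA : a ∈ A)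
    (haC : a ∈ C) : Conn G (A ∪ C) := by
  rw [Conn, Finset.coe_union]
  exact SimpleGraph.induce_union_connected hA.preconnected hC.preconnected ⟨a, haA, haC⟩

theorem union_of_adj [DecidableEq V] (hA : Conn G A) (hC : Conn G C) {a c : V} (ha : a ∈ A)
    (hc : c ∈ C) (hac : G.Adj a c) : Conn G (A ∪ C) := by
  rw [Conn, Finset.coe_union]
  exact SimpleGraph.connected_induce_union hA.preconnected hC.preconnected ha hc hac

theorem exists_adj_sdiff [DecidableEq V] (hB : Conn G B) (hCB : C ⊆ B) {x y : V} (hx : x ∈ C)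
    (hy : y ∈ B \ C) : ∃ u ∈ C, ∃ v ∈ B \ C, G.Adj u v := by
  obtain ⟨p⟩ := hB.preconnected ⟨x, hCB hx⟩ ⟨y, (Finset.mem_sdiff.mp hy).1⟩
  obtain ⟨d, -, hd₁, hd₂⟩ :=
    p.exists_boundary_dart (Subtype.val ⁻¹' (C : Set V)) hx (Finset.mem_sdiff.mp hy).2
  exact ⟨d.fst, hd₁, d.snd, Finset.mem_sdiff.mpr ⟨d.snd.2, hd₂⟩, d.adj⟩

theorem exists_adj_of_ne [DecidableEq V] (hB : Conn G B) {v w : V} (hv : v ∈ B) (hw : w ∈ B)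
    (hvw : v ≠ w) : ∃ u ∈ B, G.Adj v u := by
  obtain ⟨v', hv', u, hu, hadj⟩ := hB.exists_adj_sdiff (Finset.singleton_subset_iff.mpr hv)
    (Finset.mem_singleton_self v) (Finset.mem_sdiff.mpr ⟨hw, by simpa using hvw.symm⟩)
  rw [Finset.mem_singleton] at hv'
  exact ⟨u, (Finset.mem_sdiff.mp hu).1, hv' ▸ hadj⟩

end Conn

theorem exists_isCC {V : Type*} [DecidableEq V] {G : SimpleGraph V} {S : Finset V} {a : V}
    (ha : a ∈ S) : ∃ C, IsCC G S C ∧ a ∈ C := by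
  let T := S.powerset.filter fun C => a ∈ C ∧ Conn G C
  have haT : {a} ∈ T := by simp [T, ha, Conn.singleton]
  obtain ⟨C, hCT, hmax⟩ := T.exists_max_image Finset.card ⟨_, haT⟩
  simp only [T, Finset.mem_filter, Finset.mem_powerset] at hCT hmax
  refine ⟨C, ⟨hCT.1, hCT.2.2, fun C' hCC' hC'S hC' => ?_⟩, hCT.2.1⟩
  exact (Finset.eq_of_subset_of_card_le hCC' (hmax C' ⟨hC'S, hCC' hCT.2.1, hC'⟩)).symm

section NestedSet

variable {V : Type*} {G : SimpleGraph V}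

theorem Orth.symm {B C : Finset V} (h : Orth G B C) : Orth G C B :=
  fun a ha b hb hab => h b hb a ha hab.symm

theorem Compat.symm {B C : Finset V} (h : Compat G B C) : Compat G C B := by
  rcases h with h | h | h
  exacts [Or.inr (Or.inl h), Or.inl h, Or.inr (Or.inr h.symm)]

variable [DecidableEq V]

theorem Compat.subset_or_subset {B C : Finset V} (h : Compat G B C) (hB : Conn G B) {v : V}
    (hvB : v ∈ B) (hvC : v ∈ C) : B ⊆ C ∨ C ⊆ B := by
  rcases h with h | h | h
  · exact Or.inl h
  · exact Or.inr h
  · by_cases hw : ∃ w ∈ B, v ≠ w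
    · obtain ⟨w, hwB, hvw⟩ := hw
      obtain ⟨u, huB, hvu⟩ := hB.exists_adj_of_ne hvB hwB hvw
      exact absurd hvu.symm (h u huB v hvC)
    · push Not at hw
      exact Or.inl fun w hwB => hw w hwB ▸ hvC

theorem mem_iN {H : Finset (Finset V)} {B : Finset V} {v : V} :
    v ∈ iN H B ↔ ∃ C ∈ H, C ⊂ B ∧ v ∈ C := by
  simp only [iN, Finset.mem_sup, Finset.mem_filter, id, and_assoc]

theorem subset_iN {H : Finset (Finset V)} {B C : Finset V} (hC : C ∈ H) (hCB : C ⊂ B) :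
    C ⊆ iN H B :=
  fun _ hv => mem_iN.mpr ⟨C, hC, hCB, hv⟩

theorem iN_insert_of_ssubset {H : Finset (Finset V)} {B X : Finset V} (hXB : X ⊂ B) :
    iN (insert X H) B = X ∪ iN H B := by
  simp only [iN, Finset.filter_insert, if_pos hXB, Finset.sup_insert, id, Finset.sup_eq_union]

theorem iN_insert_of_not_ssubset {H : Finset (Finset V)} {B X : Finset V} (hXB : ¬ X ⊂ B) :
    iN (insert X H) B = iN H B := by
  simp only [iN, Finset.filter_insert, if_neg hXB]

variable [Fintype V]

theorem Nested.insert {H : Finset (Finset V)} (hH : Nested G H) {X : Finset V}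
    (hX : Conn G X) (hXH : ∀ C ∈ H, Compat G X C) : Nested G (insert X H) := by
  refine ⟨Finset.mem_insert_of_mem hH.1, Finset.forall_mem_insert _ _ _ |>.mpr ⟨hX, hH.2.1⟩, ?_⟩
  simp only [Finset.forall_mem_insert]
  exact ⟨⟨Or.inl subset_rfl, hXH⟩, fun C hC => ⟨(hXH C hC).symm, hH.2.2 C hC⟩⟩

theorem disjoint_sdiff_iN {K : Finset (Finset V)} (hK : Nested G K) {B B' : Finset V}
    (hB : B ∈ K) (hB' : B' ∈ K) (hne : B ≠ B') : Disjoint (B \ iN K B) (B' \ iN K B') := by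
  rw [Finset.disjoint_left]
  intro v hv hv'
  rw [Finset.mem_sdiff] at hv hv'
  rcases (hK.2.2 B hB B' hB').subset_or_subset (hK.2.1 B hB) hv.1 hv'.1 with h | h
  · exact hv'.2 (subset_iN hB (h.ssubset_of_ne hne) hv.1)
  · exact hv.2 (subset_iN hB' (h.ssubset_of_ne hne.symm) hv'.1)

theorem exists_mem_sdiff_iN {K : Finset (Finset V)} (hK : Nested G K) (v : V) :
    ∃ B ∈ K, v ∈ B \ iN K B := by
  obtain ⟨B, hB⟩ := (K.filter (v ∈ ·)).exists_minimal
    ⟨_, Finset.mem_filter.mpr ⟨hK.1, Finset.mem_univ v⟩⟩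
  obtain ⟨hBK, hvB⟩ := Finset.mem_filter.mp hB.prop
  refine ⟨B, hBK, Finset.mem_sdiff.mpr ⟨hvB, fun hv => ?_⟩⟩
  obtain ⟨C, hCK, hCB, hvC⟩ := mem_iN.mp hv
  exact hB.not_lt (Finset.mem_filter.mpr ⟨hCK, hvC⟩) hCB

theorem sum_nN {K : Finset (Finset V)} (hK : Nested G K) :
    ∑ B ∈ K, nN K B = Fintype.card V := by
  have hcover : K.biUnion (fun B => B \ iN K B) = Finset.univ :=
    Finset.eq_univ_of_forall fun v => Finset.mem_biUnion.mpr (exists_mem_sdiff_iN hK v)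
  rw [← Finset.card_univ, ← hcover,
    Finset.card_biUnion fun B hB B' hB' hne => disjoint_sdiff_iN hK hB hB' hne]
  rfl

theorem nN_pos {K : Finset (Finset V)} (hK : Nested G K) {B : Finset V} (hB : B ∈ K) :
    0 < nN K B := by
  rw [nN, Finset.card_pos, Finset.nonempty_iff_ne_empty, Ne, Finset.sdiff_eq_empty_iff_subset]
  intro hcov
  obtain ⟨v, hv⟩ := (hK.2.1 B hB).nonempty
  obtain ⟨C₀, hC₀K, hC₀B, -⟩ := mem_iN.mp (hcov hv)
  obtain ⟨C, hC⟩ := (K.filter (· ⊂ B)).exists_maximal ⟨C₀, Finset.mem_filter.mpr ⟨hC₀K, hC₀B⟩⟩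
  obtain ⟨hCK, hCB⟩ := Finset.mem_filter.mp hC.prop
  obtain ⟨x, hx⟩ := (hK.2.1 C hCK).nonempty
  obtain ⟨y, hy⟩ := Finset.exists_of_ssubset hCB
  obtain ⟨u, hu, w, hw, huw⟩ :=
    (hK.2.1 B hB).exists_adj_sdiff hCB.subset hx (Finset.mem_sdiff.mpr hy)
  rw [Finset.mem_sdiff] at hw
  obtain ⟨C', hC'K, hC'B, hwC'⟩ := mem_iN.mp (hcov hw.1)
  rcases hK.2.2 C hCK C' hC'K with h | h | h
  · exact hw.2 (hC.eq_of_le (Finset.mem_filter.mpr ⟨hC'K, hC'B⟩) h ▸ hwC')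
  · exact hw.2 (h hwC')
  · exact h u hu w hwC' huw

theorem sum_nN_sub_one {K : Finset (Finset V)} (hK : Nested G K) :
    ∑ B ∈ K, (nN K B - 1) = Fintype.card V - K.card := by
  rw [Finset.sum_tsub_distrib _ fun B hB => nN_pos hK hB, sum_nN hK, Finset.sum_const,
    smul_eq_mul, mul_one]

theorem Nested.card_le {K : Finset (Finset V)} (hK : Nested G K) : K.card ≤ Fintype.card V := by
  simpa [sum_nN hK] using K.card_nsmul_le_sum (nN K) 1 fun B hB => nN_pos hK hB

theorem Nested.maxNested_of_card_eq {K : Finset (Finset V)} (hK : Nested G K)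
    (hcard : K.card = Fintype.card V) : MaxNested G K :=
  ⟨hK, fun _ hK' hKK' => (Finset.eq_of_subset_of_card_le hKK' (hcard ▸ hK'.card_le)).symm⟩

theorem nN_eq_one_of_card_eq {K : Finset (Finset V)} (hK : Nested G K)
    (hcard : K.card = Fintype.card V) {B : Finset V} (hB : B ∈ K) : nN K B = 1 := by
  have hsum := sum_nN_sub_one hK
  rw [hcard, Nat.sub_self, Finset.sum_eq_zero_iff] at hsum
  have := hsum B hB
  have := nN_pos hK hB
  omega

theorem exists_nN_eq_two {H : Finset (Finset V)} (hH : Nested G H)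
    (hcard : H.card + 1 = Fintype.card V) :
    ∃ B ∈ H, nN H B = 2 ∧ ∀ B' ∈ H, 2 ≤ nN H B' → B' = B := by
  have hsum : ∑ B ∈ H, (nN H B - 1) = 1 := by rw [sum_nN_sub_one hH]; omega
  obtain ⟨B, hB, hB0⟩ := Finset.exists_ne_zero_of_sum_ne_zero (hsum ▸ one_ne_zero)
  have hsplit := Finset.add_sum_erase H (fun B' => nN H B' - 1) hB
  have hrest : ∑ B' ∈ H.erase B, (nN H B' - 1) = 0 := by omega
  refine ⟨B, hB, by omega, fun B' hB' h2 => ?_⟩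
  by_contra hne
  have := Finset.sum_eq_zero_iff.mp hrest B' (Finset.mem_erase.mpr ⟨hne, hB'⟩)
  omega

end NestedSet

section Components

variable {V : Type*} [DecidableEq V] {G : SimpleGraph V}

theorem IsCC.subset_of_conn_union {S C₀ C : Finset V} (hC₀ : IsCC G S C₀)
    (hun : Conn G (C₀ ∪ C)) (hCS : C ⊆ S) : C ⊆ C₀ := by
  rw [← hC₀.2.2 (C₀ ∪ C) Finset.subset_union_left (Finset.union_subset hC₀.1 hCS) hun]
  exact Finset.subset_union_right

theorem IsCC.subset_or_orth {S C₀ C : Finset V} (hC₀ : IsCC G S C₀) (hC : Conn G C)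
    (hCS : C ⊆ S) : C ⊆ C₀ ∨ Orth G C₀ C := by
  by_cases horth : Orth G C₀ C
  · exact Or.inr horth
  · simp only [Orth, not_forall, not_not] at horth
    obtain ⟨u, hu, v, hv, huv⟩ := horth
    exact Or.inl (hC₀.subset_of_conn_union (hC₀.2.1.union_of_adj hC hu hv huv) hCS)

variable {H : Finset (Finset V)} {B : Finset V}

theorem IsCC.notMem_of_mem_sdiff_iN {a a' : V} (ha : a ∈ B \ iN H B) (ha' : a' ∈ B)
    {C₀ : Finset V} (hC₀ : IsCC G (B.erase a') C₀) (haC₀ : a ∈ C₀) : C₀ ∉ H := by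
  intro hC₀H
  have hC₀B : C₀ ⊂ B := Finset.ssubset_iff_of_subset (hC₀.1.trans (Finset.erase_subset a' B))
    |>.mpr ⟨a', ha', fun h => Finset.notMem_erase a' B (hC₀.1 h)⟩
  exact (Finset.mem_sdiff.mp ha).2 (subset_iN hC₀H hC₀B haC₀)

variable [Fintype V]

theorem IsCC.compat_of_mem_sdiff_iN (hH : Nested G H) (hB : B ∈ H) {a' : V}
    (ha' : a' ∈ B \ iN H B) {C₀ : Finset V} (hC₀ : IsCC G (B.erase a') C₀) {C : Finset V}
    (hC : C ∈ H) : Compat G C₀ C := by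
  have hC₀B : C₀ ⊆ B := hC₀.1.trans (Finset.erase_subset a' B)
  rcases hH.2.2 C hC B hB with hCB | hBC | horth
  · obtain rfl | hne := eq_or_ne C B
    · exact Or.inl hC₀B
    have ha'C : a' ∉ C := fun h =>
      (Finset.mem_sdiff.mp ha').2 (subset_iN hC (hCB.ssubset_of_ne hne) h)
    have hCS : C ⊆ B.erase a' := fun x hx => Finset.mem_erase.mpr ⟨fun h => ha'C (h ▸ hx), hCB hx⟩
    rcases hC₀.subset_or_orth (hH.2.1 C hC) hCS with h | h
    · exact Or.inr (Or.inl h)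
    · exact Or.inr (Or.inr h)
  · exact Or.inl (hC₀B.trans hBC)
  · exact Or.inr (Or.inr fun x hx y hy hxy => horth y hy x (hC₀B hx) hxy.symm)

theorem IsCC.maxNested_insert (hH : Nested G H) (hcard : H.card + 1 = Fintype.card V)
    (hB : B ∈ H) {a a' : V} (ha : a ∈ B \ iN H B) (ha' : a' ∈ B \ iN H B) {C₀ : Finset V}
    (hC₀ : IsCC G (B.erase a') C₀) (haC₀ : a ∈ C₀) : MaxNested G (insert C₀ H) := by
  have hnested := hH.insert hC₀.2.1 fun C hC => hC₀.compat_of_mem_sdiff_iN hH hB ha' hC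
  have hC₀H := hC₀.notMem_of_mem_sdiff_iN ha (Finset.mem_sdiff.mp ha').1 haC₀
  exact hnested.maxNested_of_card_eq (by rw [Finset.card_insert_of_notMem hC₀H, hcard])

theorem IsCC.eq_of_nested_insert (hH : Nested G H) (hcard : H.card + 1 = Fintype.card V)
    (hB : B ∈ H) {a a' : V} (ha : a ∈ B \ iN H B) (ha' : a' ∈ B \ iN H B) {C₀ : Finset V}
    (hC₀ : IsCC G (B.erase a') C₀) (haC₀ : a ∈ C₀) {X : Finset V} (hX : Nested G (insert X H))
    (hXH : X ∉ H) (hXB : X ⊆ B) (haX : a ∈ X) (ha'X : a' ∉ X) : X = C₀ := by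
  have hXconn := hX.2.1 X (Finset.mem_insert_self X H)
  have hXS : X ⊆ B.erase a' := fun x hx => Finset.mem_erase.mpr ⟨fun h => ha'X (h ▸ hx), hXB hx⟩
  have hXC₀ : X ⊆ C₀ := hC₀.subset_of_conn_union (hC₀.2.1.union_of_mem hXconn haC₀ haX) hXS
  by_contra hne
  have hnested : Nested G (insert C₀ (insert X H)) := by
    refine hX.insert hC₀.2.1 (Finset.forall_mem_insert _ _ _ |>.mpr ⟨Or.inr (Or.inl hXC₀), ?_⟩)
    exact fun C hC => hC₀.compat_of_mem_sdiff_iN hH hB ha' hC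
  have hC₀X : C₀ ∉ insert X H := by
    rw [Finset.mem_insert, not_or]
    exact ⟨Ne.symm hne, hC₀.notMem_of_mem_sdiff_iN ha (Finset.mem_sdiff.mp ha').1 haC₀⟩
  have := hnested.card_le
  rw [Finset.card_insert_of_notMem hC₀X, Finset.card_insert_of_notMem hXH] at this
  omega

end Components

section DimensionOne

variable {V : Type*} [DecidableEq V] [Fintype V] {G : SimpleGraph V} {H : Finset (Finset V)}

theorem MaxNested.exists_insert_eq (hcard : H.card + 1 = Fintype.card V) {Y : Finset V}
    (hY : Nested G (insert Y H)) (hYH : Y ∉ H) {K : Finset (Finset V)} (hK : MaxNested G K)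
    (hHK : H ⊆ K) : ∃ X ∉ H, insert X H = K := by
  have hKH : K ≠ H := by
    rintro rfl
    exact hYH (hK.2 _ hY (Finset.subset_insert Y K) ▸ Finset.mem_insert_self Y K)
  have := Finset.card_lt_card (hHK.ssubset_of_ne hKH.symm)
  have := hK.1.card_le
  exact Finset.exists_eq_insert_iff.mpr ⟨hHK, by omega⟩

theorem ssubset_and_mem_iff_notMem_of_nested_insert (hcard : H.card + 1 = Fintype.card V)
    {B : Finset V} (hB : B ∈ H) {a₁ a₂ : V} (hne : a₁ ≠ a₂) (hBa : B \ iN H B = {a₁, a₂})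
    {X : Finset V} (hX : Nested G (insert X H)) (hXH : X ∉ H) : X ⊂ B ∧ (a₁ ∈ X ↔ a₂ ∉ X) := by
  have hK : nN (insert X H) B = 1 := nN_eq_one_of_card_eq hX
    (by rw [Finset.card_insert_of_notMem hXH, hcard]) (Finset.mem_insert_of_mem hB)
  have hXB : X ⊂ B := by
    by_contra hXB
    rw [nN, iN_insert_of_not_ssubset hXB, hBa, Finset.card_pair hne] at hK
    omega
  refine ⟨hXB, ?_⟩
  rw [nN, iN_insert_of_ssubset hXB, Finset.union_comm, Finset.sdiff_union_distrib,
    ← Finset.sdiff_sdiff_left', hBa] at hK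
  by_cases h₁ : a₁ ∈ X <;> by_cases h₂ : a₂ ∈ X <;>
    simp [Finset.insert_sdiff_of_mem, Finset.insert_sdiff_of_notMem, Finset.card_eq_one,
      Finset.eq_singleton_iff_unique_mem, h₁, h₂, hne] at hK ⊢

end DimensionOne

theorem stmt8_general {V : Type*} [Fintype V] [DecidableEq V]
    (Gr : SimpleGraph V)
    (H : Finset (Finset V)) (hH : Nested Gr H) (hcard : H.card + 1 = Fintype.card V) :
    ∃ B ∈ H, ∃ a₁ a₂ : V, ∃ B₁ B₂ : Finset V,
      2 ≤ nN H B ∧ (∀ B' ∈ H, 2 ≤ nN H B' → B' = B) ∧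
      a₁ ≠ a₂ ∧ B \ iN H B = {a₁, a₂} ∧
      (IsCC Gr (B.erase a₂) B₁ ∧ a₁ ∈ B₁) ∧
      (IsCC Gr (B.erase a₁) B₂ ∧ a₂ ∈ B₂) ∧
      MaxNested Gr (insert B₁ H) ∧ MaxNested Gr (insert B₂ H) ∧
      insert B₁ H ≠ insert B₂ H ∧
      (∀ K : Finset (Finset V), MaxNested Gr K → H ⊆ K →
        K = insert B₁ H ∨ K = insert B₂ H) := by
  obtain ⟨B, hB, hB2, hB1⟩ := exists_nN_eq_two hH hcard
  obtain ⟨a₁, a₂, hne, hBa⟩ := Finset.card_eq_two.mp hB2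
  have ha₁ : a₁ ∈ B \ iN H B := hBa ▸ Finset.mem_insert_self a₁ {a₂}
  have ha₂ : a₂ ∈ B \ iN H B := hBa ▸ Finset.mem_insert_of_mem (Finset.mem_singleton_self a₂)
  have ha₁B := (Finset.mem_sdiff.mp ha₁).1
  have ha₂B := (Finset.mem_sdiff.mp ha₂).1
  obtain ⟨B₁, hB₁, ha₁B₁⟩ := exists_isCC (G := Gr) (Finset.mem_erase_of_ne_of_mem hne ha₁B)
  obtain ⟨B₂, hB₂, ha₂B₂⟩ := exists_isCC (G := Gr) (Finset.mem_erase_of_ne_of_mem hne.symm ha₂B)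
  have hB₁H := hB₁.notMem_of_mem_sdiff_iN ha₁ ha₂B ha₁B₁
  have hmax₁ := hB₁.maxNested_insert hH hcard hB ha₁ ha₂ ha₁B₁
  have hmax₂ := hB₂.maxNested_insert hH hcard hB ha₂ ha₁ ha₂B₂
  refine ⟨B, hB, a₁, a₂, B₁, B₂, hB2.ge, hB1, hne, hBa, ⟨hB₁, ha₁B₁⟩, ⟨hB₂, ha₂B₂⟩, hmax₁,
    hmax₂, fun h => ?_, fun K hK hHK => ?_⟩
  · exact (Finset.mem_insert.mp (h ▸ Finset.mem_insert_self B₁ H)).elim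
      (fun h : B₁ = B₂ => Finset.notMem_erase a₂ B (hB₁.1 (h ▸ ha₂B₂))) hB₁H
  obtain ⟨X, hXH, rfl⟩ := hK.exists_insert_eq hcard hmax₁.1 hB₁H hHK
  obtain ⟨hXB, hX⟩ := ssubset_and_mem_iff_notMem_of_nested_insert hcard hB hne hBa hK.1 hXH
  by_cases ha₁X : a₁ ∈ X
  · left
    rw [hB₁.eq_of_nested_insert hH hcard hB ha₁ ha₂ ha₁B₁ hK.1 hXH hXB.subset ha₁X (hX.mp ha₁X)]
  · right
    have ha₂X : a₂ ∈ X := not_not.mp (mt hX.mpr ha₁X)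
    rw [hB₂.eq_of_nested_insert hH hcard hB ha₂ ha₁ ha₂B₂ hK.1 hXH hXB.subset ha₂X ha₁X]

/-- A nested set `H` of dimension 1 (`|H| = |V(D)| - 1`) has a unique
unsaturated element `B`, whose uncovered vertex set consists of exactly two vertices
`a₁ ≠ a₂`; with `B₁` the connected component of `B \ {a₂}` containing `a₁` and `B₂`
the connected component of `B \ {a₁}` containing `a₂`, the only two maximal nested
sets containing `H` are `H ∪ {B₁}` and `H ∪ {B₂}`. -/
theorem stmt8 {V : Type*} [Fintype V] [DecidableEq V]
    (Gr : SimpleGraph V) (hGr : Gr.Connected)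
    (H : Finset (Finset V)) (hH : Nested Gr H) (hcard : H.card + 1 = Fintype.card V) :
    ∃ B ∈ H, ∃ a₁ a₂ : V, ∃ B₁ B₂ : Finset V,
      2 ≤ nN H B ∧ (∀ B' ∈ H, 2 ≤ nN H B' → B' = B) ∧
      a₁ ≠ a₂ ∧ B \ iN H B = {a₁, a₂} ∧
      (IsCC Gr (B.erase a₂) B₁ ∧ a₁ ∈ B₁) ∧
      (IsCC Gr (B.erase a₁) B₂ ∧ a₂ ∈ B₂) ∧
      MaxNested Gr (insert B₁ H) ∧ MaxNested Gr (insert B₂ H) ∧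
      insert B₁ H ≠ insert B₂ H ∧
      (∀ K : Finset (Finset V), MaxNested Gr K → H ⊆ K →
        K = insert B₁ H ∨ K = insert B₂ H) :=
  stmt8_general Gr H hH hcard
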